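/- (Non-negativity of leakage.) For every primitive P on a finite product 𝒳×𝒴 and every phase function θ, the regular embedding ψ_θ satisfies S(ρ_B(θ)) ≥ I(X;Y) and S(ρ_A(θ)) ≥ I(X;Y); i.e. the leakage Δ(ψ_θ) of every regular embedding is non-negative. -/

import Mathlib

open scoped BigOperators
open Matrix

noncomputable section

open scoped Classical in
/-- Base-2 von Neumann entropy of a matrix: minus the sum of `λ·log₂ λ` over the real
eigenvalues (with multiplicity) if the matrix is Hermitian, and `0` otherwise. -/
def vNE {n : Type*} [Fintype n] (ρ : Matrix n n ℂ) : ℝ :=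
  if h : ρ.IsHermitian then -∑ i, h.eigenvalues i * Real.logb 2 (h.eigenvalues i) else 0

/-- Shannon entropy (base 2), with the convention `0·log₂ 0 = 0`. -/
def shannon {α : Type*} [Fintype α] (p : α → ℝ) : ℝ :=
  -∑ a, p a * Real.logb 2 (p a)

/-- Marginal on the first component: `P_X`. -/
def margX {X Y : Type*} [Fintype Y] (P : X × Y → ℝ) (x : X) : ℝ := ∑ y, P (x, y)

/-- Marginal on the second component: `P_Y`. -/
def margY {X Y : Type*} [Fintype X] (P : X × Y → ℝ) (y : Y) : ℝ := ∑ x, P (x, y)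

/-- Mutual information `I(X;Y)` of a joint distribution `P` (base 2). -/
def mutualInfo {X Y : Type*} [Fintype X] [Fintype Y] (P : X × Y → ℝ) : ℝ :=
  ∑ x, ∑ y, P (x, y) * Real.logb 2 (P (x, y) / (margX P x * margY P y))

/-- The regular embedding `ψ_θ(x,y) = e^{iθ(x,y)}·√(P(x,y))`. -/
def regEmb {X Y : Type*} (P θ : X × Y → ℝ) (xy : X × Y) : ℂ :=
  Complex.exp (Complex.I * θ xy) * (Real.sqrt (P xy) : ℂ)

/-- Reduced density matrix `ρ_A(θ)` of the regular embedding `ψ_θ`. -/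
def rhoA {X Y : Type*} [Fintype Y] (P θ : X × Y → ℝ) : Matrix X X ℂ :=
  Matrix.of fun x x' => ∑ y, regEmb P θ (x, y) * star (regEmb P θ (x', y))

/-- Reduced density matrix `ρ_B(θ)` of the regular embedding `ψ_θ`. -/
def rhoB {X Y : Type*} [Fintype X] (P θ : X × Y → ℝ) : Matrix Y Y ℂ :=
  Matrix.of fun y y' => ∑ x, regEmb P θ (x, y) * star (regEmb P θ (x, y'))

/-- Leakage `Δ(ψ_θ) = S(ρ_B(θ)) − I(X;Y)` of a regular embedding. -/
def leakReg {X Y : Type*} [Fintype X] [Fintype Y] (P θ : X × Y → ℝ) : ℝ :=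
  vNE (rhoB P θ) - mutualInfo P

/-- Leakage `Δ_P` of a primitive: the infimum of the leakage over all phase functions. -/
def leakPrim {X Y : Type*} [Fintype X] [Fintype Y] (P : X × Y → ℝ) : ℝ :=
  ⨅ θ : X × Y → ℝ, leakReg P θ

/-!
Write `ψ_θ` as a matrix `G`, so that the reduced density matrix is `ρ = G Gᴴ` and
`P(i, j) = ‖G i j‖²`; in nats, `I(X;Y) = H(rows) + H(columns) − H(P)`.
Fix `ε > 0` and the strictly positive `M = ρ + ε`. For positive weights `w`, the matrix
`W^{1/2} M W^{1/2}` is bounded by its trace, i.e. `M ≤ (∑ᵢ wᵢ Mᵢᵢ) · diag(1/w)`, and operator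
monotonicity of `log` turns this into `⟨φ, log M φ⟩ ≤ ∑ᵢ ‖φᵢ‖² log((∑ⱼ wⱼ Mⱼⱼ)/wᵢ)`.
With `wᵢ ≈ ‖φᵢ‖²/Mᵢᵢ` this is the data-processing inequality
`D(|φ|² ‖ diag M) ≤ −⟨φ, log M φ⟩` (unit `φ`) for the pinching to the diagonal. Summing it over the columns
`φ` of `G` gives `tr(ρ log M)` on the left, and `ε → 0` yields `H(rows) + H(columns) − H(P) ≤ S(ρ)`.
Both `ρ_A` and `ρ_B` are of the form `G Gᴴ`, and `I(X;Y)` is symmetric.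
-/

open scoped MatrixOrder Matrix.Norms.L2Operator ComplexOrder
open Real Filter Topology

lemma mul_log_add_le {s t : ℝ} (hs : 0 ≤ s) (ht : 0 ≤ t) : s * log (s + t) ≤ s * log s + t := by
  rcases hs.eq_or_lt with rfl | hs
  · simp [ht]
  have h := log_le_sub_one_of_pos (show 0 < (s + t) / s by positivity)
  rw [log_div (by positivity) hs.ne'] at h
  have : s * ((s + t) / s - 1) = t := by field_simp; ring
  nlinarith

lemma mul_log_le_mul_log_add {s t : ℝ} (hs : 0 ≤ s) (ht : 0 ≤ t) :
    s * log s ≤ s * log (s + t) := by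
  rcases hs.eq_or_lt with rfl | hs
  · simp
  exact mul_le_mul_of_nonneg_left (log_le_log hs (by linarith)) hs.le

lemma le_of_forall_pos_le_add_mul {a b c : ℝ} (h : ∀ ε > 0, a ≤ b + c * ε) : a ≤ b := by
  have hlim : Tendsto (fun ε => b + c * ε) (𝓝[>] 0) (𝓝 b) :=
    ((continuous_const.add (continuous_const.mul continuous_id)).tendsto' 0 b (by simp)).mono_left
      nhdsWithin_le_nhds
  exact ge_of_tendsto hlim (eventually_nhdsWithin_of_forall h)

namespace Matrix

section Quadratic

variable {m n : Type*} [Fintype n]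

lemma re_mul_conjTranspose_self_apply (G : Matrix m n ℂ) (i : m) :
    ((G * Gᴴ) i i).re = ∑ j, ‖G i j‖ ^ 2 := by
  simp [mul_apply, Complex.re_sum, Complex.mul_conj, Complex.normSq_eq_norm_sq, -Complex.ofReal_pow]

variable [Fintype m]

lemma sum_dotProduct_mulVec_col (G : Matrix m n ℂ) (L : Matrix m m ℂ) :
    ∑ j, star (fun i => G i j) ⬝ᵥ L *ᵥ (fun i => G i j) = (L * (G * Gᴴ)).trace := by
  rw [← Matrix.mul_assoc, trace_mul_cycle, trace]
  simp only [diag, mul_apply, dotProduct, mulVec, Finset.mul_sum, Finset.sum_mul,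
    conjTranspose_apply, Pi.star_apply, mul_assoc]
  exact Finset.sum_congr rfl fun j _ => Finset.sum_comm

variable [DecidableEq m]

lemma re_dotProduct_diagonal_mulVec (d : m → ℝ) (φ : m → ℂ) :
    (star φ ⬝ᵥ diagonal (fun i => (d i : ℂ)) *ᵥ φ).re = ∑ i, ‖φ i‖ ^ 2 * d i := by
  simp only [dotProduct, mulVec_diagonal, Complex.re_sum, Pi.star_apply]
  refine Finset.sum_congr rfl fun i _ => ?_
  rw [mul_left_comm, Complex.re_ofReal_mul, Complex.star_def, ← Complex.normSq_eq_conj_mul_self,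
    Complex.ofReal_re, Complex.normSq_eq_norm_sq, mul_comm]

end Quadratic

variable {m : Type*} [Fintype m] [DecidableEq m]

lemma PosSemidef.le_trace_smul_one {A : Matrix m m ℂ} (hA : A.PosSemidef) : A ≤ A.trace • 1 := by
  have hle : A ≤ algebraMap ℝ (Matrix m m ℂ) (∑ k, hA.1.eigenvalues k) := by
    refine le_algebraMap_of_spectrum_le fun x hx => ?_
    rw [hA.1.spectrum_real_eq_range_eigenvalues] at hx
    obtain ⟨k, rfl⟩ := hx
    exact Finset.single_le_sum (fun j _ => hA.eigenvalues_nonneg j) (Finset.mem_univ k)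
  convert hle using 1
  rw [hA.1.trace_eq_sum_eigenvalues, Algebra.algebraMap_eq_smul_one, ← Complex.coe_smul]
  push_cast; rfl

lemma PosSemidef.le_diagonal {M : Matrix m m ℂ} (hM : M.PosSemidef) {w : m → ℝ}
    (hw : ∀ i, 0 < w i) :
    M ≤ diagonal fun i => (((∑ j, w j * (M j j).re) / w i : ℝ) : ℂ) := by
  set W : Matrix m m ℂ := diagonal fun i => (√(w i) : ℂ)
  set V : Matrix m m ℂ := diagonal fun i => ((√(w i))⁻¹ : ℂ)
  have hsqrt : ∀ i, (√(w i) : ℂ) ≠ 0 := fun i => by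
    exact_mod_cast (Real.sqrt_pos.mpr (hw i)).ne'
  have hVW : V * W = 1 := by
    simp only [V, W, diagonal_mul_diagonal, inv_mul_cancel₀ (hsqrt _), diagonal_one]
  have hWV : W * V = 1 := by
    simp only [V, W, diagonal_mul_diagonal, mul_inv_cancel₀ (hsqrt _), diagonal_one]
  have hWstar : Wᴴ = W := by simp [W, diagonal_conjTranspose, Complex.conj_ofReal]
  have hVstar : star V = V := by
    simp [V, star_eq_conjTranspose, diagonal_conjTranspose, Complex.conj_ofReal]
  have htrace : (W * M * W).trace = ((∑ j, w j * (M j j).re : ℝ) : ℂ) := by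
    simp only [W, trace, diag, mul_diagonal, diagonal_mul]
    push_cast
    refine Finset.sum_congr rfl fun j _ => ?_
    rw [show ((M j j).re : ℂ) = M j j from hM.1.coe_re_apply_self j, mul_comm, ← mul_assoc,
      ← Complex.ofReal_mul, Real.mul_self_sqrt (hw j).le]
  have hD := (hM.conjTranspose_mul_mul_same W).le_trace_smul_one
  rw [hWstar] at hD
  have hconj := star_left_conjugate_le_conjugate hD V
  rw [hVstar] at hconj
  convert hconj using 1
  · simp only [← mul_assoc, hVW, one_mul]
    rw [mul_assoc, hWV, mul_one]
  · rw [mul_smul_comm, smul_mul_assoc, mul_one, diagonal_mul_diagonal, ← diagonal_smul, htrace]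
    congr 1; ext i
    rw [Pi.smul_apply, smul_eq_mul, ← mul_inv, ← Complex.ofReal_mul, Real.mul_self_sqrt (hw i).le]
    push_cast; ring

lemma log_diagonal {d : m → ℝ} (hd : ∀ i, 0 < d i) :
    CFC.log (diagonal fun i => (d i : ℂ)) = diagonal fun i => (Real.log (d i) : ℂ) := by
  have hexp : (diagonal fun i => (d i : ℂ))
      = NormedSpace.exp (diagonal fun i => (Real.log (d i) : ℂ)) := by
    rw [exp_diagonal]
    congr 1; ext i
    simp [← Complex.exp_eq_exp_ℂ, ← Complex.ofReal_exp, Real.exp_log (hd i)]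
  exact hexp ▸ CFC.log_exp _
    (isHermitian_diagonal_iff.mpr fun i => Complex.conj_ofReal _).isSelfAdjoint

lemma PosDef.re_dotProduct_log_mulVec_le {M : Matrix m m ℂ} (hM : M.PosDef) {w : m → ℝ}
    (hw : ∀ i, 0 < w i) (φ : m → ℂ) :
    (star φ ⬝ᵥ CFC.log M *ᵥ φ).re
      ≤ ∑ i, ‖φ i‖ ^ 2 * Real.log ((∑ j, w j * (M j j).re) / w i) := by
  have hdiag : ∀ i, 0 < (∑ j, w j * (M j j).re) / w i := fun i =>
    div_pos (Finset.sum_pos (fun j _ => mul_pos (hw j) (Complex.pos_iff.mp hM.diag_pos).1)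
      ⟨i, Finset.mem_univ i⟩) (hw i)
  have hlog := CFC.log_le_log (hM.posSemidef.le_diagonal hw) hM.isStrictlyPositive
  rw [log_diagonal hdiag, le_iff] at hlog
  have hform := hlog.dotProduct_mulVec_nonneg φ
  rw [sub_mulVec, dotProduct_sub, sub_nonneg] at hform
  rw [← re_dotProduct_diagonal_mulVec]
  exact (Complex.le_def.mp hform).1

lemma PosDef.re_dotProduct_log_mulVec_le_negMulLog {M : Matrix m m ℂ} (hM : M.PosDef)
    (φ : m → ℂ) :
    (star φ ⬝ᵥ CFC.log M *ᵥ φ).re ≤ ∑ i, ‖φ i‖ ^ 2 * Real.log (M i i).re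
      + ∑ i, negMulLog (‖φ i‖ ^ 2) - negMulLog (∑ i, ‖φ i‖ ^ 2) := by
  set v : m → ℝ := fun i => ‖φ i‖ ^ 2
  set s := ∑ j, v j
  have hv : ∀ i, 0 ≤ v i := fun i => by positivity
  have hs : 0 ≤ s := Finset.sum_nonneg fun j _ => hv j
  have hd : ∀ i, 0 < (M i i).re := fun i => (Complex.pos_iff.mp hM.diag_pos).1
  refine le_of_forall_pos_le_add_mul (c := Fintype.card m) fun δ hδ => ?_
  -- `wᵢ = vᵢ / Mᵢᵢ` would make the bound exact; `δ` keeps the weights positive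
  have hw : ∀ i, 0 < (v i + δ) / (M i i).re := fun i => div_pos (by linarith [hv i]) (hd i)
  have hμ : ∑ j, (v j + δ) / (M j j).re * (M j j).re = s + Fintype.card m * δ := by
    simp [div_mul_cancel₀ _ (hd _).ne', Finset.sum_add_distrib, s]
  have hbound := hM.re_dotProduct_log_mulVec_le hw φ
  rw [hμ] at hbound
  change _ ≤ ∑ i, v i * _ at hbound
  have hNδ : 0 ≤ Fintype.card m * δ := by positivity
  have hsplit : ∀ i, v i * Real.log ((s + Fintype.card m * δ) / ((v i + δ) / (M i i).re))
      = v i * Real.log (s + Fintype.card m * δ) + v i * Real.log (M i i).re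
        - v i * Real.log (v i + δ) := by
    intro i
    rcases (hv i).eq_or_lt with h0 | h0
    · simp [← h0]
    have hvs : v i ≤ s := Finset.single_le_sum (fun j _ => hv j) (Finset.mem_univ i)
    rw [Real.log_div (by linarith) (div_pos (by linarith) (hd i)).ne',
      Real.log_div (by linarith) (hd i).ne']
    ring
  have hlog : ∀ i, v i * Real.log (v i) ≤ v i * Real.log (v i + δ) := fun i =>
    mul_log_le_mul_log_add (hv i) hδ.le
  calc (star φ ⬝ᵥ CFC.log M *ᵥ φ).re
      ≤ s * Real.log (s + Fintype.card m * δ) + ∑ i, v i * Real.log (M i i).re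
          - ∑ i, v i * Real.log (v i + δ) := by
        simpa only [hsplit, Finset.sum_sub_distrib, Finset.sum_add_distrib, ← Finset.sum_mul]
          using hbound
    _ ≤ (s * Real.log s + Fintype.card m * δ) + ∑ i, v i * Real.log (M i i).re
          - ∑ i, v i * Real.log (v i) := by
        linarith [mul_log_add_le hs hNδ, Finset.sum_le_sum fun i (_ : i ∈ Finset.univ) => hlog i]
    _ = _ := by simp only [negMulLog, Finset.sum_neg_distrib, neg_mul]; ring

lemma IsHermitian.trace_cfc {A : Matrix m m ℂ} (hA : A.IsHermitian) (f : ℝ → ℝ) :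
    (cfc f A).trace = ∑ k, (f (hA.eigenvalues k) : ℂ) := by
  rw [hA.cfc_eq, IsHermitian.cfc, Unitary.conjStarAlgAut_apply, trace_mul_cycle,
    Unitary.coe_star_mul_self, one_mul, trace_diagonal]
  rfl

lemma log_add_algebraMap_eq_cfc {A : Matrix m m ℂ} (hA : A.IsHermitian) (ε : ℝ) :
    CFC.log (A + algebraMap ℝ _ ε) = cfc (fun t => Real.log (t + ε)) A := by
  have hfin := A.finite_real_spectrum
  calc CFC.log (A + algebraMap ℝ _ ε) = cfc Real.log (cfc (fun t => t + ε) A) := by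
        rw [cfc_add_const ε (fun t => t) A, cfc_id' ℝ A, CFC.log]
    _ = cfc (fun t => Real.log (t + ε)) A :=
        (cfc_comp' _ _ A ((hfin.image _).continuousOn _) (hfin.continuousOn _)).symm

theorem sum_negMulLog_row_add_col_sub_le_eigenvalues {n : Type*} [Fintype n]
    (G : Matrix m n ℂ) :
    ∑ i, negMulLog (∑ j, ‖G i j‖ ^ 2) + ∑ j, negMulLog (∑ i, ‖G i j‖ ^ 2)
        - ∑ i, ∑ j, negMulLog (‖G i j‖ ^ 2)
      ≤ ∑ k, negMulLog ((isHermitian_mul_conjTranspose_self G).eigenvalues k) := by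
  have hA := isHermitian_mul_conjTranspose_self G
  set ev := hA.eigenvalues
  set q : m → ℝ := fun i => ∑ j, ‖G i j‖ ^ 2
  refine le_of_forall_pos_le_add_mul (c := Fintype.card m) fun ε hε => ?_
  set M := G * Gᴴ + algebraMap ℝ _ ε
  have hM : M.PosDef :=
    (IsStrictlyPositive.nonneg_add (nonneg_iff_posSemidef.mpr (posSemidef_self_mul_conjTranspose G))
      (isStrictlyPositive_algebraMap hε)).posDef
  have hMdiag : ∀ i, (M i i).re = q i + ε := fun i => by
    simp [M, re_mul_conjTranspose_self_apply, q, algebraMap_eq_diagonal]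
  have hfin := (G * Gᴴ).finite_real_spectrum
  have hlogmul : CFC.log M * (G * Gᴴ) = cfc (fun t => Real.log (t + ε) * t) (G * Gᴴ) := by
    rw [log_add_algebraMap_eq_cfc hA, cfc_mul _ _ _ (hfin.continuousOn _) (hfin.continuousOn _),
      cfc_id' ℝ (G * Gᴴ)]
  have htrace : ∑ j, (star (fun i => G i j) ⬝ᵥ CFC.log M *ᵥ (fun i => G i j)).re
      = ∑ k, ev k * Real.log (ev k + ε) := by
    rw [← Complex.re_sum, sum_dotProduct_mulVec_col, hlogmul, hA.trace_cfc, Complex.re_sum]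
    simp [ev, mul_comm]
  have hcols := Finset.sum_le_sum fun j (_ : j ∈ Finset.univ) =>
    hM.re_dotProduct_log_mulVec_le_negMulLog (fun i => G i j)
  simp only [htrace, hMdiag, Finset.sum_add_distrib, Finset.sum_sub_distrib] at hcols
  have hrows : ∑ j, ∑ i, ‖G i j‖ ^ 2 * Real.log (q i + ε) = ∑ i, q i * Real.log (q i + ε) := by
    rw [Finset.sum_comm]; simp only [q, Finset.sum_mul]
  have hq : ∑ i, q i * Real.log (q i + ε) ≤ ∑ i, q i * Real.log (q i) + Fintype.card m * ε := by
    simpa [Finset.sum_add_distrib] using Finset.sum_le_sum fun i (_ : i ∈ Finset.univ) =>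
      mul_log_add_le (Finset.sum_nonneg fun j _ => sq_nonneg ‖G i j‖) hε.le
  have hev : ∑ k, ev k * Real.log (ev k) ≤ ∑ k, ev k * Real.log (ev k + ε) :=
    Finset.sum_le_sum fun k _ =>
      mul_log_le_mul_log_add ((posSemidef_self_mul_conjTranspose G).eigenvalues_nonneg k) hε.le
  rw [Finset.sum_comm (f := fun i j => negMulLog (‖G i j‖ ^ 2))]
  simp only [negMulLog, neg_mul, Finset.sum_neg_distrib] at hcols ⊢
  linarith

end Matrix

lemma shannon_eq_sum_negMulLog {α : Type*} [Fintype α] (p : α → ℝ) :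
    shannon p = (∑ a, negMulLog (p a)) / log 2 := by
  simp only [shannon, negMulLog, logb, neg_mul, Finset.sum_neg_distrib, neg_div, Finset.sum_div,
    mul_div_assoc]

open scoped Classical in
lemma vNE_eq_sum_negMulLog {n : Type*} [Fintype n] {A : Matrix n n ℂ} (hA : A.IsHermitian) :
    vNE A = (∑ k, negMulLog (hA.eigenvalues k)) / log 2 := by
  simp only [vNE, dif_pos hA, negMulLog, logb, neg_mul, Finset.sum_neg_distrib, neg_div,
    Finset.sum_div, mul_div_assoc]

lemma mul_logb_div_mul {a b c : ℝ} (ha : 0 ≤ a) (hab : a ≤ b) (hac : a ≤ c) :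
    a * logb 2 (a / (b * c)) = a * logb 2 a - a * logb 2 b - a * logb 2 c := by
  rcases ha.eq_or_lt with rfl | ha
  · simp
  have hb := ha.trans_le hab
  have hc := ha.trans_le hac
  rw [logb_div ha.ne' (mul_pos hb hc).ne', logb_mul hb.ne' hc.ne']
  ring

lemma mutualInfo_eq_shannon {X Y : Type*} [Fintype X] [Fintype Y] {P : X × Y → ℝ}
    (hP : ∀ xy, 0 ≤ P xy) :
    mutualInfo P = shannon (margX P) + shannon (margY P) - shannon P := by
  have hX : ∀ x y, P (x, y) ≤ margX P x := fun x y =>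
    Finset.single_le_sum (fun y' _ => hP (x, y')) (Finset.mem_univ y)
  have hY : ∀ x y, P (x, y) ≤ margY P y := fun x y =>
    Finset.single_le_sum (fun x' _ => hP (x', y)) (Finset.mem_univ x)
  have hterm : ∀ x y, P (x, y) * logb 2 (P (x, y) / (margX P x * margY P y))
      = P (x, y) * logb 2 (P (x, y)) - P (x, y) * logb 2 (margX P x)
        - P (x, y) * logb 2 (margY P y) := fun x y => mul_logb_div_mul (hP _) (hX x y) (hY x y)
  simp only [mutualInfo, hterm, Finset.sum_sub_distrib, shannon, Fintype.sum_prod_type]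
  rw [Finset.sum_comm (f := fun x y => P (x, y) * logb 2 (margY P y))]
  simp only [margX, margY, Finset.sum_mul]
  ring

lemma mutualInfo_comp_swap {X Y : Type*} [Fintype X] [Fintype Y] (P : X × Y → ℝ) :
    mutualInfo (fun yx : Y × X => P (yx.2, yx.1)) = mutualInfo P := by
  rw [mutualInfo, mutualInfo, Finset.sum_comm]
  simp only [margX, margY, mul_comm (∑ x, P (x, _))]

lemma mutualInfo_le_vNE_mul_conjTranspose {m n : Type*} [Fintype m] [Fintype n]
    (G : Matrix m n ℂ) : mutualInfo (fun ij : m × n => ‖G ij.1 ij.2‖ ^ 2) ≤ vNE (G * Gᴴ) := by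
  classical
  rw [mutualInfo_eq_shannon fun _ => by positivity, shannon_eq_sum_negMulLog,
    shannon_eq_sum_negMulLog, shannon_eq_sum_negMulLog,
    vNE_eq_sum_negMulLog (isHermitian_mul_conjTranspose_self G), ← add_div, ← sub_div,
    Fintype.sum_prod_type]
  exact div_le_div_of_nonneg_right G.sum_negMulLog_row_add_col_sub_le_eigenvalues
    (log_pos one_lt_two).le

lemma norm_regEmb_sq {X Y : Type*} {P : X × Y → ℝ} (θ : X × Y → ℝ) {xy : X × Y}
    (hP : 0 ≤ P xy) : ‖regEmb P θ xy‖ ^ 2 = P xy := by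
  rw [regEmb, norm_mul, Complex.norm_exp, mul_comm Complex.I]
  simp [hP]

lemma rhoA_eq {X Y : Type*} [Fintype Y] (P θ : X × Y → ℝ) :
    rhoA P θ = (of fun x y => regEmb P θ (x, y)) * (of fun x y => regEmb P θ (x, y))ᴴ := by
  ext; simp [rhoA, mul_apply]

lemma rhoB_eq {X Y : Type*} [Fintype X] (P θ : X × Y → ℝ) :
    rhoB P θ = (of fun y x => regEmb P θ (x, y)) * (of fun y x => regEmb P θ (x, y))ᴴ := by
  ext; simp [rhoB, mul_apply]

theorem leakReg_nonneg_general
    {𝒳 𝒴 : Type*} [Fintype 𝒳] [Fintype 𝒴]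
    (P : 𝒳 × 𝒴 → ℝ) (hP0 : ∀ xy, 0 ≤ P xy)
    (θ : 𝒳 × 𝒴 → ℝ) :
    mutualInfo P ≤ vNE (rhoB P θ) ∧ mutualInfo P ≤ vNE (rhoA P θ) ∧
      0 ≤ leakReg P θ := by
  have hB : mutualInfo P ≤ vNE (rhoB P θ) := by
    rw [← mutualInfo_comp_swap, rhoB_eq]
    simpa [norm_regEmb_sq θ (hP0 _)] using
      mutualInfo_le_vNE_mul_conjTranspose (of fun y x => regEmb P θ (x, y))
  have hA : mutualInfo P ≤ vNE (rhoA P θ) := by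
    rw [rhoA_eq]
    simpa [norm_regEmb_sq θ (hP0 _)] using
      mutualInfo_le_vNE_mul_conjTranspose (of fun x y => regEmb P θ (x, y))
  exact ⟨hB, hA, sub_nonneg.mpr hB⟩

/-- **Non-negativity of leakage.** For every primitive `P` and every phase
function `θ`, `S(ρ_B(θ)) ≥ I(X;Y)` and `S(ρ_A(θ)) ≥ I(X;Y)`; in particular the leakage
`Δ(ψ_θ)` of every regular embedding is non-negative. -/
theorem leakReg_nonneg
    {𝒳 𝒴 : Type*} [Fintype 𝒳] [Fintype 𝒴] [Nonempty 𝒳] [Nonempty 𝒴]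
    (P : 𝒳 × 𝒴 → ℝ) (hP0 : ∀ xy, 0 ≤ P xy) (hP1 : ∑ xy, P xy = 1)
    (θ : 𝒳 × 𝒴 → ℝ) :
    mutualInfo P ≤ vNE (rhoB P θ) ∧ mutualInfo P ≤ vNE (rhoA P θ) ∧
      0 ≤ leakReg P θ :=
  leakReg_nonneg_general P hP0 θ
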